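/- arXiv:1909.09643 — 2 statements merged into one kernel-verified Lean document; each statement's English description precedes it below -/
import Mathlib

section
/- Let 𝒜 be a laminar family of subsets of a finite set S, and let m be a positive integer. Then there exists a subset A ⊆ S such that for every P ∈ 𝒜, ⌊|P|/m⌋ ≤ |A ∩ P| ≤ ⌈|P|/m⌉. -/
/-!
Lay `S` out on `ℕ` so that every member of the laminar family becomes an interval: split off a
maximal proper member `P`; every other proper member lies inside `P` or misses it, so laying out
`P` and the rest recursively, side by side, works. Then take every `m`-th point of the layout: an
interval of length `k` contains between `⌊k / m⌋` and `⌈k / m⌉` multiples of `m`.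
-/

/-- A family of finite sets is laminar if any two members are nested or disjoint. -/
def Laminar {S : Type*} [DecidableEq S] (𝒜 : Set (Finset S)) : Prop :=
  ∀ A ∈ 𝒜, ∀ B ∈ 𝒜, A ⊆ B ∨ B ⊆ A ∨ A ∩ B = ∅

open Finset

namespace Nat

lemma card_Ico_filter_dvd_add_one (m b k : ℕ) :
    #{y ∈ Ico b (b + k) | m ∣ y + 1} = (b + k) / m - b / m := by
  have hsplit : range (b + k) = range b ∪ Ico b (b + k) := by
    rw [range_eq_Ico, range_eq_Ico, Ico_union_Ico_eq_Ico (zero_le b) (le_add_right b k)]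
  have hdisj : Disjoint (range b) (Ico b (b + k)) := by
    rw [range_eq_Ico]
    exact Ico_disjoint_Ico_consecutive 0 b (b + k)
  have htotal := card_multiples (b + k) m
  rw [hsplit, filter_union, card_union_of_disjoint (disjoint_filter_filter hdisj),
    card_multiples] at htotal
  omega

lemma div_le_add_div_sub_div (m b k : ℕ) : k / m ≤ (b + k) / m - b / m := by
  have := Nat.div_add_div_le_add_div (x := b) (y := k) (z := m)
  omega

lemma add_div_sub_div_le (m b k : ℕ) : (b + k) / m - b / m ≤ (k + m - 1) / m := by
  rcases m.eq_zero_or_pos with rfl | hm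
  · simp
  have hb : b + k ≤ (k + m - 1) + m * (b / m) := by
    have := div_add_mod b m
    have := mod_lt b hm
    omega
  have hdiv := Nat.div_le_div_right (c := m) hb
  rw [Nat.add_mul_div_left _ _ hm] at hdiv
  exact Nat.sub_le_iff_le_add.mpr hdiv

end Nat

section

variable {S : Type*}

lemma exists_image_eq_Ico [DecidableEq S] (T : Finset S) (a : ℕ) :
    ∃ f : S → ℕ, T.image f = Ico a (a + #T) := by
  induction T using Finset.induction_on with
  | empty => exact ⟨fun _ ↦ 0, by simp⟩
  | insert x T hx ih =>
    obtain ⟨f, hf⟩ := ih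
    refine ⟨Function.update f x (a + #T), ?_⟩
    rw [image_insert, Function.update_self, image_congr (g := f), hf, card_insert_of_notMem hx,
      ← add_assoc, Nat.Ico_succ_right_eq_insert_Ico (Nat.le_add_right a _)]
    intro y hy
    exact Function.update_of_ne (ne_of_mem_of_not_mem hy hx) _ _

lemma image_piecewise_eq_Ico [DecidableEq S] {P T : Finset S} {f g : S → ℕ} {a : ℕ}
    (hPT : P ⊆ T) (hf : P.image f = Ico a (a + #P))
    (hg : (T \ P).image g = Ico (a + #P) (a + #P + #(T \ P))) :
    T.image (P.piecewise f g) = Ico a (a + #T) := by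
  have hf' : Set.EqOn (P.piecewise f g) f P := fun x hx ↦ piecewise_eq_of_mem _ _ _ hx
  have hg' : Set.EqOn (P.piecewise f g) g ↑(T \ P) :=
    fun x hx ↦ piecewise_eq_of_notMem _ _ _ (mem_sdiff.1 hx).2
  rw [← union_sdiff_of_subset hPT, image_union, image_congr hf', image_congr hg', hf, hg,
    card_union_of_disjoint disjoint_sdiff, ← add_assoc,
    Ico_union_Ico_eq_Ico (Nat.le_add_right _ _) (Nat.le_add_right _ _)]

def IsIntervalImage (f : S → ℕ) (P : Finset S) : Prop :=
  ∃ b, P.image f = Ico b (b + #P)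

lemma isIntervalImage_empty (f : S → ℕ) : IsIntervalImage f ∅ := ⟨0, by simp⟩

lemma IsIntervalImage.congr {f g : S → ℕ} {P : Finset S} (hf : IsIntervalImage f P)
    (hfg : Set.EqOn f g P) : IsIntervalImage g P := by
  rwa [IsIntervalImage, ← image_congr hfg]

lemma card_filter_of_image_eq_Ico {f : S → ℕ} {P : Finset S} {b : ℕ}
    (hf : P.image f = Ico b (b + #P)) (p : ℕ → Prop) [DecidablePred p] :
    #{x ∈ P | p (f x)} = #{y ∈ Ico b (b + #P) | p y} := by
  have hinj : Set.InjOn f P :=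
    card_image_iff.1 (by rw [hf, Nat.card_Ico, Nat.add_sub_cancel_left])
  rw [← hf, filter_image, card_image_of_injOn (hinj.mono (filter_subset _ _))]

lemma Laminar.subset_or_disjoint_of_maximal [DecidableEq S] {𝒜 : Set (Finset S)}
    (h𝒜 : Laminar 𝒜) {T P Q : Finset S} (hP : Maximal (fun R ↦ R ∈ 𝒜 ∧ R.Nonempty ∧ R ⊂ T) P)
    (hQ : Q ∈ 𝒜) (hQT : Q ⊂ T) : Q ⊆ P ∨ Disjoint Q P := by
  rcases h𝒜 Q hQ P hP.1.1 with hQP | hPQ | hQP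
  · exact .inl hQP
  · exact .inl (hP.2 ⟨hQ, hP.1.2.1.mono hPQ, hQT⟩ hPQ)
  · exact .inr (disjoint_iff_inter_eq_empty.2 hQP)

theorem Laminar.exists_isIntervalImage [DecidableEq S] {𝒜 : Set (Finset S)} (h𝒜 : Laminar 𝒜)
    (T : Finset S) (a : ℕ) :
    ∃ f : S → ℕ, T.image f = Ico a (a + #T) ∧ ∀ Q ∈ 𝒜, Q ⊆ T → IsIntervalImage f Q := by
  induction T using Finset.strongInduction generalizing a with
  | H T ih =>
  suffices ∃ f : S → ℕ, T.image f = Ico a (a + #T) ∧ ∀ Q ∈ 𝒜, Q ⊂ T → IsIntervalImage f Q by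
    obtain ⟨f, hf, hQ⟩ := this
    exact ⟨f, hf, fun Q hQ𝒜 hQT ↦ hQT.eq_or_ssubset.elim (fun h ↦ h ▸ ⟨a, hf⟩) (hQ Q hQ𝒜)⟩
  by_cases hT : ∃ P, P ∈ 𝒜 ∧ P.Nonempty ∧ P ⊂ T
  · obtain ⟨P, hP⟩ : ∃ P, Maximal (fun R ↦ R ∈ 𝒜 ∧ R.Nonempty ∧ R ⊂ T) P :=
      Set.Finite.exists_maximal (T.ssubsets.finite_toSet.subset fun R hR ↦ mem_ssubsets.2 hR.2.2)
        hT
    obtain ⟨-, hPne, hPT⟩ := hP.1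
    obtain ⟨f, hf, hQf⟩ := ih P hPT a
    obtain ⟨g, hg, hQg⟩ := ih (T \ P) (sdiff_ssubset hPT.subset hPne) (a + #P)
    refine ⟨P.piecewise f g, image_piecewise_eq_Ico hPT.subset hf hg, fun Q hQ hQT ↦ ?_⟩
    rcases h𝒜.subset_or_disjoint_of_maximal hP hQ hQT with hQP | hQP
    · exact (hQf Q hQ hQP).congr fun x hx ↦ (piecewise_eq_of_mem _ _ _ (hQP hx)).symm
    · have hQTP : Q ⊆ T \ P := subset_sdiff.2 ⟨hQT.subset, hQP⟩
      exact (hQg Q hQ hQTP).congr fun x hx ↦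
        (piecewise_eq_of_notMem _ _ _ (disjoint_left.1 hQP hx)).symm
  · obtain ⟨f, hf⟩ := exists_image_eq_Ico T a
    refine ⟨f, hf, fun Q hQ hQT ↦ ?_⟩
    obtain rfl : Q = ∅ := not_nonempty_iff_eq_empty.1 fun hne ↦ hT ⟨Q, hQ, hne, hQT⟩
    exact isIntervalImage_empty f

end

theorem stmt7_general {S : Type*} [Fintype S] [DecidableEq S]
    (𝒜 : Set (Finset S)) (h𝒜 : Laminar 𝒜) (m : ℕ) :
    ∃ A : Finset S, ∀ P ∈ 𝒜,
      P.card / m ≤ (A ∩ P).card ∧ (A ∩ P).card ≤ (P.card + m - 1) / m := by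
  obtain ⟨f, -, hf⟩ := h𝒜.exists_isIntervalImage univ 0
  refine ⟨univ.filter (m ∣ f · + 1), fun P hP ↦ ?_⟩
  obtain ⟨b, hb⟩ := hf P hP (subset_univ P)
  have hcard : #(univ.filter (m ∣ f · + 1) ∩ P) = (b + #P) / m - b / m := by
    rw [filter_inter, univ_inter, card_filter_of_image_eq_Ico hb (m ∣ · + 1),
      Nat.card_Ico_filter_dvd_add_one]
  rw [hcard]
  exact ⟨Nat.div_le_add_div_sub_div m b #P, Nat.add_div_sub_div_le m b #P⟩

/-- Single-family version of Nash-Williams' lemma. -/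
theorem stmt7 {S : Type*} [Fintype S] [DecidableEq S]
    (𝒜 : Set (Finset S)) (h𝒜 : Laminar 𝒜) (m : ℕ) (hm : 0 < m) :
    ∃ A : Finset S, ∀ P ∈ 𝒜,
      P.card / m ≤ (A ∩ P).card ∧ (A ∩ P).card ≤ (P.card + m - 1) / m :=
  stmt7_general 𝒜 h𝒜 m
end

section
/- Let G be a k-edge-colored hypergraph with a distinguished vertex α. For each color i, let H_i be the set of hinges at α incident with edges of color i; for each edge e, let H_e be the set of hinges at α incident with e; for each α-wing W of a color class, let H_W be its hinge set at α; and let H^i be the union of H_W over α-wings W of color class i with degree at α at least 2. Then the family 𝒜 consisting of all H_i, all H^i, all H_W, and all H_e is a laminar family of subsets of the hinge set H(α). -/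
variable {V E : Type*}

/-- Vertex set of the sub-hypergraph given by a set W of edge instances. -/
def vertsIdx (edge : E → Multiset V) (W : Finset E) : Set V :=
  {v | ∃ e ∈ W, v ∈ edge e}

/-- Adjacency within the sub-hypergraph W. -/
def stepIdx (edge : E → Multiset V) (W : Finset E) (u v : V) : Prop :=
  ∃ e ∈ W, u ∈ edge e ∧ v ∈ edge e

/-- Connectivity of the sub-hypergraph W. -/
def connIdx (edge : E → Multiset V) (W : Finset E) : Prop :=
  ∀ u ∈ vertsIdx edge W, ∀ v ∈ vertsIdx edge W,
    Relation.ReflTransGen (stepIdx edge W) u v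

/-- α is a cut vertex of the sub-hypergraph W. -/
def cutIdx [DecidableEq E] (edge : E → Multiset V) (W : Finset E) (α : V) : Prop :=
  ∃ I J : Finset E, I ∪ J = W ∧ Disjoint I J ∧ I.Nonempty ∧ J.Nonempty ∧
    vertsIdx edge I ∩ vertsIdx edge J = {α}

/-- W is an α-wing of the sub-hypergraph G: non-trivial, connected, α is not a
cut vertex of W, and no edge of G outside W meets V(W) ∖ {α}. -/
def wingIdx [DecidableEq E] (edge : E → Multiset V) (G W : Finset E) (α : V) : Prop :=
  W ⊆ G ∧ W.Nonempty ∧ connIdx edge W ∧ ¬ cutIdx edge W α ∧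
    ∀ e ∈ G \ W, ∀ v ∈ edge e, v ∈ vertsIdx edge W → v = α

/-- Degree of α in the sub-hypergraph W (number of hinges of W at α). -/
def degIdx [DecidableEq V] (edge : E → Multiset V) (W : Finset E) (α : V) : ℕ :=
  ∑ e ∈ W, (edge e).count α

/-!
Every set of the family is a union of fibres of the edge map `x ↦ x.1`, so an edge hinge set
`H_e` is nested with or disjoint from each of them, and every other set lies inside the hinge
set of a single color, so sets of different colors are disjoint. Within one color, two
α-wings sharing a hinge are nested: otherwise `W ∩ W'` and `W ∖ W'` would split `W` at the
cut vertex α. Finally a wing of degree at least 2 lies in `H^i`, and one of degree at most 1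
has at most one hinge.
-/

section Laminar

variable {X Y : Type*}

def LaminarPair (A B : Set X) : Prop :=
  A ⊆ B ∨ B ⊆ A ∨ A ∩ B = ∅

namespace LaminarPair

variable {A B : Set X}

theorem refl (A : Set X) : LaminarPair A A :=
  Or.inl subset_rfl

theorem symm (h : LaminarPair A B) : LaminarPair B A := by
  rcases h with h | h | h
  exacts [Or.inr (Or.inl h), Or.inl h, Or.inr (Or.inr (Set.inter_comm A B ▸ h))]

theorem of_subsingleton_left (hA : A.Subsingleton) : LaminarPair A B := by
  rcases (A ∩ B).eq_empty_or_nonempty with h | ⟨x, hxA, hxB⟩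
  · exact Or.inr (Or.inr h)
  · exact Or.inl fun y hy => hA hy hxA ▸ hxB

theorem preimage_singleton (f : X → Y) (y : Y) (S : Set Y) :
    LaminarPair (f ⁻¹' {y}) (f ⁻¹' S) := by
  by_cases hy : y ∈ S
  · exact Or.inl fun x (hx : f x = y) => show f x ∈ S by rwa [hx]
  · exact Or.inr (Or.inr (Set.eq_empty_of_forall_notMem fun x ⟨hx, hxS⟩ =>
      hy ((hx : f x = y) ▸ hxS)))

theorem of_subset_fibers {f : X → Y} {i j : Y} (hA : A ⊆ f ⁻¹' {i}) (hB : B ⊆ f ⁻¹' {j})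
    (h : i = j → LaminarPair A B) : LaminarPair A B := by
  by_cases hij : i = j
  · exact h hij
  · exact Or.inr (Or.inr (Set.eq_empty_of_forall_notMem fun x ⟨hxA, hxB⟩ =>
      hij (((hA hxA : f x = i)).symm.trans (hB hxB))))

theorem fiber_of_subset_fiber {f : X → Y} {i j : Y} (hB : B ⊆ f ⁻¹' {j}) :
    LaminarPair (f ⁻¹' {i}) B :=
  of_subset_fibers subset_rfl hB fun hij => Or.inr (Or.inl (hij ▸ hB))

end LaminarPair

end Laminar

section Wings

variable {edge : E → Multiset V} {α : V} [DecidableEq E] {G W W' : Finset E}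

theorem wingIdx.mem_of_mem_of_mem (hW : wingIdx edge G W α) (hW' : wingIdx edge G W' α)
    {e f : E} (heW : e ∈ W) (heW' : e ∈ W') (hαe : α ∈ edge e) (hfW : f ∈ W)
    (hαf : α ∈ edge f) : f ∈ W' := by
  by_contra hfW'
  have he : e ∈ W ∩ W' := Finset.mem_inter.mpr ⟨heW, heW'⟩
  have hf : f ∈ W \ W' := Finset.mem_sdiff.mpr ⟨hfW, hfW'⟩
  refine hW.2.2.2.1 ⟨W \ W', W ∩ W', Finset.sdiff_union_inter W W',
    Finset.disjoint_sdiff_inter W W', ⟨f, hf⟩, ⟨e, he⟩, ?_⟩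
  refine Set.eq_singleton_iff_unique_mem.mpr ⟨⟨⟨f, hf, hαf⟩, ⟨e, he, hαe⟩⟩, ?_⟩
  rintro v ⟨⟨g, hg, hvg⟩, ⟨h, hh, hvh⟩⟩
  have hgG : g ∈ G \ W' := Finset.mem_sdiff.mpr ⟨hW.1 (Finset.mem_sdiff.mp hg).1,
    (Finset.mem_sdiff.mp hg).2⟩
  exact hW'.2.2.2.2 g hgG v hvg ⟨h, (Finset.mem_inter.mp hh).2, hvh⟩

end Wings

section Hinges

variable [DecidableEq V] {edge : E → Multiset V} {α : V}

variable (edge α) in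
abbrev Hinge : Type _ :=
  Σ e : E, Fin ((edge e).count α)

theorem mem_edge_of_hinge (x : Hinge edge α) : α ∈ edge x.1 :=
  Multiset.count_pos.mp x.2.pos

theorem subsingleton_hinges_of_degIdx_le_one {W : Finset E} (h : degIdx edge W α ≤ 1) :
    {x : Hinge edge α | x.1 ∈ W}.Subsingleton := by
  classical
  rintro ⟨e, i⟩ (he : e ∈ W) ⟨f, j⟩ (hf : f ∈ W)
  obtain rfl : e = f := by
    by_contra hef
    have hpair : (edge e).count α + (edge f).count α ≤ degIdx edge W α :=
      calc _ = ∑ g ∈ {e, f}, (edge g).count α := (Finset.sum_pair hef).symm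
        _ ≤ degIdx edge W α :=
          Finset.sum_le_sum_of_subset (Finset.insert_subset he (Finset.singleton_subset_iff.2 hf))
    have := i.pos
    have := j.pos
    omega
  have hcount : (edge e).count α ≤ 1 :=
    (Finset.single_le_sum (f := fun g => (edge g).count α) (fun _ _ => Nat.zero_le _) he).trans h
  obtain rfl : i = j := Fin.ext (by omega)
  rfl

variable [DecidableEq E] {G W W' : Finset E}

theorem wingIdx.laminarPair_hinges (hW : wingIdx edge G W α) (hW' : wingIdx edge G W' α) :
    LaminarPair {x : Hinge edge α | x.1 ∈ W} {x | x.1 ∈ W'} := by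
  rcases Set.eq_empty_or_nonempty ({x : Hinge edge α | x.1 ∈ W} ∩
    {x | x.1 ∈ W'}) with h | ⟨x, hxW, hxW'⟩
  · exact Or.inr (Or.inr h)
  · exact Or.inl fun y hyW =>
      hW.mem_of_mem_of_mem hW' hxW hxW' (mem_edge_of_hinge x) hyW (mem_edge_of_hinge y)

end Hinges

section Coloring

variable [DecidableEq V] [Fintype E] [DecidableEq E] (edge : E → Multiset V) {k : ℕ}
  (color : E → Fin k) (α : V)

/-- `H^i`. -/
def bigWingHinges (i : Fin k) : Set (Hinge edge α) :=
  ⋃ W ∈ {W : Finset E | wingIdx edge (Finset.univ.filter (fun e => color e = i)) W α ∧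
    2 ≤ degIdx edge W α}, {x | x.1 ∈ W}

/-- `A` is one of `H_i`, `H^i` or `H_W` for an α-wing `W` of color class `i`. -/
def IsColorHingeSet (i : Fin k) (A : Set (Hinge edge α)) : Prop :=
  A = {x | color x.1 = i} ∨ A = bigWingHinges edge color α i ∨
    ∃ W : Finset E, wingIdx edge (Finset.univ.filter (fun e => color e = i)) W α ∧
      A = {x | x.1 ∈ W}

variable {edge color α}

theorem mem_bigWingHinges {i : Fin k} {x : Hinge edge α} :
    x ∈ bigWingHinges edge color α i ↔
      ∃ W : Finset E, (wingIdx edge (Finset.univ.filter (fun e => color e = i)) W α ∧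
        2 ≤ degIdx edge W α) ∧ x.1 ∈ W := by
  simp [bigWingHinges]

theorem wingIdx.hinges_subset_colorClass {i : Fin k} {W : Finset E}
    (hW : wingIdx edge (Finset.univ.filter (fun e => color e = i)) W α) :
    {x : Hinge edge α | x.1 ∈ W} ⊆ {x | color x.1 = i} :=
  fun _ hx => (Finset.mem_filter.mp (hW.1 hx)).2

theorem bigWingHinges_subset_colorClass (i : Fin k) :
    bigWingHinges edge color α i ⊆ {x | color x.1 = i} := fun _ hx => by
  obtain ⟨W, ⟨hW, -⟩, hxW⟩ := mem_bigWingHinges.mp hx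
  exact hW.hinges_subset_colorClass hxW

theorem wingIdx.laminarPair_bigWingHinges {i : Fin k} {W : Finset E}
    (hW : wingIdx edge (Finset.univ.filter (fun e => color e = i)) W α) :
    LaminarPair {x : Hinge edge α | x.1 ∈ W}
      (bigWingHinges edge color α i) := by
  by_cases hdeg : 2 ≤ degIdx edge W α
  · exact Or.inl fun x hx => mem_bigWingHinges.mpr ⟨W, ⟨hW, hdeg⟩, hx⟩
  · exact .of_subsingleton_left (subsingleton_hinges_of_degIdx_le_one (by omega))

namespace IsColorHingeSet

variable {i j : Fin k} {A B : Set (Hinge edge α)}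

theorem subset_colorClass (hA : IsColorHingeSet edge color α i A) :
    A ⊆ {x | color x.1 = i} := by
  rcases hA with rfl | rfl | ⟨W, hW, rfl⟩
  exacts [subset_rfl, bigWingHinges_subset_colorClass i, hW.hinges_subset_colorClass]

theorem exists_eq_preimage (hA : IsColorHingeSet edge color α i A) :
    ∃ S : Set E, A = Sigma.fst ⁻¹' S := by
  rcases hA with rfl | rfl | ⟨W, -, rfl⟩
  · exact ⟨{e | color e = i}, rfl⟩
  · refine ⟨⋃ W ∈ {W : Finset E | wingIdx edge (Finset.univ.filter (fun e => color e = i)) W α ∧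
      2 ≤ degIdx edge W α}, (W : Set E), ?_⟩
    simp only [bigWingHinges, Set.preimage_iUnion₂]
    rfl
  · exact ⟨W, rfl⟩

theorem laminarPair_of_same_color (hA : IsColorHingeSet edge color α i A)
    (hB : IsColorHingeSet edge color α i B) : LaminarPair A B := by
  rcases hA with rfl | rfl | ⟨W, hW, rfl⟩
  · exact LaminarPair.fiber_of_subset_fiber (f := fun x : Hinge edge α => color x.1)
      hB.subset_colorClass
  all_goals rcases hB with rfl | rfl | ⟨W', hW', rfl⟩
  · exact (LaminarPair.fiber_of_subset_fiber (f := fun x : Hinge edge α => color x.1)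
      (bigWingHinges_subset_colorClass i)).symm
  · exact .refl _
  · exact hW'.laminarPair_bigWingHinges.symm
  · exact (LaminarPair.fiber_of_subset_fiber (f := fun x : Hinge edge α => color x.1)
      hW.hinges_subset_colorClass).symm
  · exact hW.laminarPair_bigWingHinges
  · exact hW.laminarPair_hinges hW'

theorem laminarPair (hA : IsColorHingeSet edge color α i A)
    (hB : IsColorHingeSet edge color α j B) : LaminarPair A B :=
  LaminarPair.of_subset_fibers (f := fun x : Hinge edge α => color x.1) hA.subset_colorClass
    hB.subset_colorClass fun hij => hA.laminarPair_of_same_color (hij ▸ hB)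

end IsColorHingeSet

theorem edgeHinges_or_isColorHingeSet {A : Set (Hinge edge α)}
    (hA : (∃ i : Fin k, A = {x : Hinge edge α | color x.1 = i}) ∨
      (∃ i : Fin k, A = bigWingHinges edge color α i) ∨
      (∃ i : Fin k, ∃ W : Finset E,
        wingIdx edge (Finset.univ.filter (fun e => color e = i)) W α ∧
          A = {x : Hinge edge α | x.1 ∈ W}) ∨
      (∃ e₀ : E, A = {x : Hinge edge α | x.1 = e₀})) :
    (∃ e₀ : E, A = Sigma.fst ⁻¹' {e₀}) ∨ ∃ i, IsColorHingeSet edge color α i A := by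
  rcases hA with ⟨i, h⟩ | ⟨i, h⟩ | ⟨i, h⟩ | ⟨e₀, h⟩
  exacts [.inr ⟨i, .inl h⟩, .inr ⟨i, .inr (.inl h)⟩, .inr ⟨i, .inr (.inr h)⟩, .inl ⟨e₀, h⟩]

end Coloring

/-- For a k-edge-colored hypergraph (edge instances E, edges as multisets,
colors), the family consisting of the color hinge sets H_i, the sets H^i (union
of hinge sets of α-wings of color i of degree ≥ 2 at α), the hinge sets H_W of
α-wings of the color classes, and the edge hinge sets H_e, is a laminar family
of subsets of H(α). Hinges at α are modelled as pairs (edge instance, occurrence). -/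
theorem stmt10 [DecidableEq V] [Fintype E] [DecidableEq E]
    (edge : E → Multiset V) (k : ℕ) (color : E → Fin k) (α : V) :
    ∀ A ∈ ({S : Set (Σ e : E, Fin ((edge e).count α)) |
          (∃ i : Fin k, S = {x | color x.1 = i}) ∨
          (∃ i : Fin k, S = ⋃ W ∈ {W : Finset E |
              wingIdx edge (Finset.univ.filter (fun e => color e = i)) W α ∧
              2 ≤ degIdx edge W α}, {x | x.1 ∈ W}) ∨
          (∃ i : Fin k, ∃ W : Finset E,
              wingIdx edge (Finset.univ.filter (fun e => color e = i)) W α ∧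
              S = {x | x.1 ∈ W}) ∨
          (∃ e₀ : E, S = {x | x.1 = e₀})} : Set (Set (Σ e : E, Fin ((edge e).count α)))),
      ∀ B ∈ ({S : Set (Σ e : E, Fin ((edge e).count α)) |
          (∃ i : Fin k, S = {x | color x.1 = i}) ∨
          (∃ i : Fin k, S = ⋃ W ∈ {W : Finset E |
              wingIdx edge (Finset.univ.filter (fun e => color e = i)) W α ∧
              2 ≤ degIdx edge W α}, {x | x.1 ∈ W}) ∨
          (∃ i : Fin k, ∃ W : Finset E,
              wingIdx edge (Finset.univ.filter (fun e => color e = i)) W α ∧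
              S = {x | x.1 ∈ W}) ∨
          (∃ e₀ : E, S = {x | x.1 = e₀})} : Set (Set (Σ e : E, Fin ((edge e).count α)))),
      A ⊆ B ∨ B ⊆ A ∨ A ∩ B = ∅ := by
  intro A hA B hB
  rcases edgeHinges_or_isColorHingeSet hA with ⟨e, rfl⟩ | ⟨i, hA⟩ <;>
    rcases edgeHinges_or_isColorHingeSet hB with ⟨f, rfl⟩ | ⟨j, hB⟩
  · exact LaminarPair.preimage_singleton Sigma.fst e {f}
  · obtain ⟨S, rfl⟩ := hB.exists_eq_preimage
    exact LaminarPair.preimage_singleton Sigma.fst e S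
  · obtain ⟨S, rfl⟩ := hA.exists_eq_preimage
    exact (LaminarPair.preimage_singleton Sigma.fst f S).symm
  · exact hA.laminarPair hB
end
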